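/- arXiv:2112.15489 — 2 statements merged into one kernel-verified Lean document; each statement's English description precedes it below -/
import Mathlib

section
/- For any fixed unicast power P_un ∈ [0,P], the optimal value of the max–min fairness problem P1, i.e., the supremum of min_{j,k} SE_{jk} over all feasible points, equals (1 − (U+G)/T)·log₂(1 + Γ), where Γ = P_mu·N / (P·Σ_{j=1}^G K_j + Σ_{j=1}^G 1/Υ_j + Σ_{j=1}^G Σ_{t=1}^{K_j} 1/η_{jt}) and P_mu = P − P_un. -/
open Finset

noncomputable section

/-- Effective estimation quality `ξ_{jk} = τ q_{jk}^{up} η_{jk}² / (1 + Σ_t τ q_{jt}^{up} η_{jt})`. -/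
def xiMu {G : ℕ} {K : Fin G → ℕ} (η : ∀ j : Fin G, Fin (K j) → ℝ)
    (τ : ℕ) (qup : ∀ j : Fin G, Fin (K j) → ℝ) (j : Fin G) (k : Fin (K j)) : ℝ :=
  (τ : ℝ) * qup j k * (η j k) ^ 2 / (1 + ∑ t, (τ : ℝ) * qup j t * η j t)

/-- `SINR_{jk} = N q_j^{dl} ξ_{jk} / (1 + η_{jk} (P_un + Σ_i q_i^{dl}))`. -/
def sinrMu {G : ℕ} {K : Fin G → ℕ} (N : ℕ) (Pun : ℝ)
    (η : ∀ j : Fin G, Fin (K j) → ℝ) (τ : ℕ)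
    (qup : ∀ j : Fin G, Fin (K j) → ℝ) (qdl : Fin G → ℝ)
    (j : Fin G) (k : Fin (K j)) : ℝ :=
  (N : ℝ) * qdl j * xiMu η τ qup j k / (1 + η j k * (Pun + ∑ i, qdl i))

/-- `SE_{jk} = (1 - τ/T) log₂(1 + SINR_{jk})`. -/
def seMu {G : ℕ} {K : Fin G → ℕ} (N T : ℕ) (Pun : ℝ)
    (η : ∀ j : Fin G, Fin (K j) → ℝ) (τ : ℕ)
    (qup : ∀ j : Fin G, Fin (K j) → ℝ) (qdl : Fin G → ℝ)
    (j : Fin G) (k : Fin (K j)) : ℝ :=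
  (1 - (τ : ℝ) / (T : ℝ)) * Real.logb 2 (1 + sinrMu N Pun η τ qup qdl j k)

/-- The max–min fairness objective `min_{j,k} SE_{jk}` of problem P1. -/
def objMu {G : ℕ} {K : Fin G → ℕ} (N T : ℕ) (Pun : ℝ)
    (η : ∀ j : Fin G, Fin (K j) → ℝ) (τ : ℕ)
    (qup : ∀ j : Fin G, Fin (K j) → ℝ) (qdl : Fin G → ℝ) : ℝ :=
  ⨅ j : Fin G, ⨅ k : Fin (K j), seMu N T Pun η τ qup qdl j k

/-- Feasibility for problem P1 with fixed unicast power `Pun`. -/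
def feasMu {G : ℕ} {K : Fin G → ℕ} (U T : ℕ) (P Pun : ℝ)
    (E : ∀ j : Fin G, Fin (K j) → ℝ) (τ : ℕ)
    (qup : ∀ j : Fin G, Fin (K j) → ℝ) (qdl : Fin G → ℝ) : Prop :=
  U + G ≤ τ ∧ τ ≤ T ∧
    (∀ j k, 0 ≤ qup j k ∧ (τ : ℝ) * qup j k ≤ E j k) ∧
    (∀ j, 0 ≤ qdl j) ∧ ∑ j, qdl j ≤ P - Pun

/-- `Υ_j = min_k E_{jk} η_{jk}² / (1 + η_{jk} P)`. -/
def UpsMu {G : ℕ} {K : Fin G → ℕ} (P : ℝ)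
    (η E : ∀ j : Fin G, Fin (K j) → ℝ) (j : Fin G) : ℝ :=
  ⨅ k : Fin (K j), E j k * (η j k) ^ 2 / (1 + η j k * P)

/-- `Γ = P_mu N / (P Σ_j K_j + Σ_j 1/Υ_j + Σ_j Σ_t 1/η_{jt})` with `P_mu = P - P_un`. -/
def GamMu {G : ℕ} {K : Fin G → ℕ} (N : ℕ) (P Pun : ℝ)
    (η E : ∀ j : Fin G, Fin (K j) → ℝ) : ℝ :=
  (P - Pun) * (N : ℝ) /
    (P * ∑ j, (K j : ℝ) + ∑ j, 1 / UpsMu P η E j + ∑ j, ∑ t, 1 / η j t)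

/-- `x_{jk}* = Υ_j (1 + η_{jk} P) / η_{jk}²`. -/
def xStarMu {G : ℕ} {K : Fin G → ℕ} (P : ℝ)
    (η E : ∀ j : Fin G, Fin (K j) → ℝ) (j : Fin G) (k : Fin (K j)) : ℝ :=
  UpsMu P η E j * (1 + η j k * P) / (η j k) ^ 2

/-- `q_{jk}^{up*} = Υ_j (1 + η_{jk} P) / ((U+G) η_{jk}²)`. -/
def qupStarMu (U : ℕ) {G : ℕ} {K : Fin G → ℕ} (P : ℝ)
    (η E : ∀ j : Fin G, Fin (K j) → ℝ) (j : Fin G) (k : Fin (K j)) : ℝ :=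
  xStarMu P η E j k / ((U + G : ℕ) : ℝ)

/-- `q_j^{dl*} = (Γ/(N Υ_j)) (1 + Σ_t x_{jt}* η_{jt})`. -/
def qdlStarMu {G : ℕ} {K : Fin G → ℕ} (N : ℕ) (P Pun : ℝ)
    (η E : ∀ j : Fin G, Fin (K j) → ℝ) (j : Fin G) : ℝ :=
  GamMu N P Pun η E / ((N : ℝ) * UpsMu P η E j) * (1 + ∑ t, xStarMu P η E j t * η j t)

/-! The value is attained with the shortest pilot `τ = U + G`, pilot energies
`x_{jk} = Υ_j (1 + η_{jk} P) / η_{jk}²` (which exhaust `E_{jk}` at the weakest user of each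
group) and downlink powers `q_j = Γ c_j(P) / N`, where `c_j(S) / N` is the downlink power group `j`
needs per unit of SINR when the total downlink power is `S`: then every user has SINR `Γ`.

Conversely, at a feasible point with total downlink power `S = P_un + Σ q_i`, some user of
group `j` has `SINR · c_j(S) ≤ N q_j`. As `c_j` is affine in `S` with nonnegative
coefficients and `Σ q_i ≤ P_mu`, we get `N Σ q_j ≤ Γ Σ c_j(S)`, so some group has
`N q_j ≤ Γ c_j(S)` and hence a user with SINR at most `Γ`; and the pre-log factor
`1 - τ/T` is largest at `τ = U + G`. -/

/-- `c_j(S)`: a multicast group with pilot energies at most `e` and total downlink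
power `S` always has a user whose SINR is at most `N q / c_j(S)`, for any choice of `i`. -/
def powerPerSinr {ι : Type*} [Fintype ι] (η e : ι → ℝ) (i : ι) (S : ℝ) : ℝ :=
  (1 + η i * S) / (e i * η i ^ 2) + ∑ t, (1 + η t * S) / η t

theorem exists_gain_mul_powerPerSinr_le {ι : Type*} [Fintype ι] [Nonempty ι]
    {η x e : ι → ℝ} {S : ℝ} (hη : ∀ k, 0 < η k) (hx : ∀ k, 0 ≤ x k)
    (hxe : ∀ k, x k ≤ e k) (hS : 0 ≤ S) (i : ι) :
    ∃ k, x k * η k ^ 2 / (1 + ∑ t, x t * η t) / (1 + η k * S) * powerPerSinr η e i S ≤ 1 := by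
  have hηS : ∀ k, 0 < 1 + η k * S := fun k => by have := hη k; positivity
  set r : ι → ℝ := fun k => x k * η k ^ 2 / (1 + η k * S)
  set a : ι → ℝ := fun t => (1 + η t * S) / η t
  -- `x t * η t = r t * a t`, so the SINR of the user minimising `r` is bounded
  obtain ⟨k, hk⟩ := Finite.exists_min r
  refine ⟨k, ?_⟩
  have hxη : ∑ t, x t * η t = ∑ t, r t * a t := sum_congr rfl fun t _ => by
    have := (hη t).ne'; have := (hηS t).ne'
    simp only [r, a]; field_simp
  have hri : r k * ((1 + η i * S) / (e i * η i ^ 2)) ≤ 1 := by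
    rw [← one_div_div, mul_one_div]
    have := hηS i; have := (hx i).trans (hxe i)
    refine div_le_one_of_le₀ ((hk i).trans ?_) (by positivity)
    exact div_le_div_of_nonneg_right (mul_le_mul_of_nonneg_right (hxe i) (sq_nonneg _)) (hηS i).le
  have hra : ∑ t, r k * a t ≤ ∑ t, r t * a t :=
    sum_le_sum fun t _ => mul_le_mul_of_nonneg_right (hk t) (div_pos (hηS t) (hη t)).le
  have hden : 0 ≤ 1 + ∑ t, x t * η t :=
    add_nonneg zero_le_one (sum_nonneg fun t _ => mul_nonneg (hx t) (hη t).le)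
  rw [hxη] at hden ⊢
  calc x k * η k ^ 2 / (1 + ∑ t, r t * a t) / (1 + η k * S) * powerPerSinr η e i S
      = r k / (1 + ∑ t, r t * a t) * powerPerSinr η e i S := by rw [div_right_comm]
    _ = (r k * ((1 + η i * S) / (e i * η i ^ 2)) + ∑ t, r k * a t) / (1 + ∑ t, r t * a t) := by
        rw [div_mul_eq_mul_div, powerPerSinr, mul_add, mul_sum]
    _ ≤ 1 := div_le_one_of_le₀ (by linarith) hden

theorem mul_one_add_mul_le {c p q m : ℝ} (hc : 0 ≤ c) (hp : 0 ≤ p) (hqm : q ≤ m) :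
    q * (1 + c * (p + m)) ≤ m * (1 + c * (p + q)) := by
  nlinarith [mul_nonneg (sub_nonneg.2 hqm) (add_nonneg zero_le_one (mul_nonneg hc hp))]

theorem mul_powerPerSinr_le {ι : Type*} [Fintype ι] {η e : ι → ℝ} {i : ι} {p q m : ℝ}
    (hη : ∀ t, 0 ≤ η t) (he : 0 ≤ e i) (hp : 0 ≤ p) (hqm : q ≤ m) :
    q * powerPerSinr η e i (p + m) ≤ m * powerPerSinr η e i (p + q) := by
  have key : ∀ {c d : ℝ}, 0 ≤ c → 0 ≤ d →
      q * ((1 + c * (p + m)) / d) ≤ m * ((1 + c * (p + q)) / d) := fun hc hd => by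
    rw [mul_div_assoc', mul_div_assoc']
    exact div_le_div_of_nonneg_right (mul_one_add_mul_le hc hp hqm) hd
  rw [powerPerSinr, powerPerSinr, mul_add q, mul_add m, mul_sum, mul_sum]
  exact add_le_add (key (hη i) (by have := hη i; positivity))
    (sum_le_sum fun t _ => key (hη t) (hη t))

theorem powerPerSinr_pos {ι : Type*} [Fintype ι] {η e : ι → ℝ} {i : ι} {S : ℝ}
    (hη : ∀ t, 0 < η t) (he : 0 < e i) (hS : 0 ≤ S) : 0 < powerPerSinr η e i S := by
  have hsum : 0 ≤ ∑ t, (1 + η t * S) / η t :=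
    sum_nonneg fun t _ => by have := hη t; positivity
  have := hη i
  exact add_pos_of_pos_of_nonneg (by positivity) hsum

theorem one_sub_div_mul_logb_le {a b T s γ : ℝ} (hT : 0 ≤ T) (hab : a ≤ b) (hbT : b ≤ T)
    (hs : 0 ≤ s) (hsγ : s ≤ γ) :
    (1 - b / T) * Real.logb 2 (1 + s) ≤ (1 - a / T) * Real.logb 2 (1 + γ) := by
  have hdiv : a / T ≤ b / T := div_le_div_of_nonneg_right hab hT
  have haT : a / T ≤ 1 := div_le_one_of_le₀ (hab.trans hbT) hT
  refine mul_le_mul (by linarith) ?_ (Real.logb_nonneg one_lt_two (by linarith)) (by linarith)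
  exact Real.logb_le_logb_of_le one_lt_two (by linarith) (by linarith)

section

variable {U T : ℕ} {G : ℕ} {K : Fin G → ℕ} {η E : ∀ j : Fin G, Fin (K j) → ℝ} {N : ℕ}
  {P Pun : ℝ} {τ : ℕ} {qup : ∀ j : Fin G, Fin (K j) → ℝ} {qdl : Fin G → ℝ}

theorem UpsMu_le (j : Fin G) (k : Fin (K j)) :
    UpsMu P η E j ≤ E j k * η j k ^ 2 / (1 + η j k * P) :=
  ciInf_le (Finite.bddBelow_range _) k

theorem exists_UpsMu_eq (j : Fin G) [Nonempty (Fin (K j))] :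
    ∃ k, UpsMu P η E j = E j k * η j k ^ 2 / (1 + η j k * P) :=
  exists_eq_ciInf_of_finite.imp fun _ h => h.symm

theorem UpsMu_pos (hη : ∀ j k, 0 < η j k) (hE : ∀ j k, 0 < E j k) (hP : 0 ≤ P)
    (j : Fin G) [Nonempty (Fin (K j))] : 0 < UpsMu P η E j := by
  obtain ⟨k, hk⟩ := exists_UpsMu_eq (P := P) (η := η) (E := E) j
  rw [hk]
  have := hη j k; have := hE j k
  positivity

def groupPowerPerSinr (P : ℝ) (η E : ∀ j : Fin G, Fin (K j) → ℝ) (j : Fin G) : ℝ :=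
  1 / UpsMu P η E j + ∑ t, (1 + η j t * P) / η j t

theorem powerPerSinr_eq_groupPowerPerSinr {j : Fin G} {k : Fin (K j)}
    (hk : UpsMu P η E j = E j k * η j k ^ 2 / (1 + η j k * P)) :
    powerPerSinr (η j) (E j) k P = groupPowerPerSinr P η E j := by
  rw [powerPerSinr, groupPowerPerSinr, hk, one_div_div]

theorem groupPowerPerSinr_pos (hη : ∀ j k, 0 < η j k) (hP : 0 ≤ P) {j : Fin G}
    (hΥ : 0 < UpsMu P η E j) :
    0 < groupPowerPerSinr P η E j := by
  have : 0 ≤ ∑ t, (1 + η j t * P) / η j t :=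
    sum_nonneg fun t _ => by have := hη j t; positivity
  exact add_pos_of_pos_of_nonneg (one_div_pos.2 hΥ) this

theorem GamMu_eq (hη : ∀ j k, 0 < η j k) :
    GamMu N P Pun η E = (P - Pun) * N / ∑ j, groupPowerPerSinr P η E j := by
  have hsplit : ∀ j, ∑ t, (1 + η j t * P) / η j t = ∑ t, 1 / η j t + K j * P := fun j => by
    simp only [add_div, mul_div_cancel_left₀ _ (hη j _).ne', sum_add_distrib, sum_const,
      card_univ, Fintype.card_fin, nsmul_eq_mul]
  simp only [GamMu, groupPowerPerSinr, hsplit, sum_add_distrib, ← sum_mul]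
  ring

theorem sum_xStarMu_mul_eq (hη : ∀ j k, 0 < η j k) (j : Fin G) :
    ∑ t, xStarMu P η E j t * η j t = UpsMu P η E j * ∑ t, (1 + η j t * P) / η j t := by
  rw [mul_sum]
  refine sum_congr rfl fun t _ => ?_
  have := (hη j t).ne'
  rw [xStarMu]
  field_simp

theorem qdlStarMu_eq (hη : ∀ j k, 0 < η j k) {j : Fin G} (hΥ : UpsMu P η E j ≠ 0) :
    qdlStarMu N P Pun η E j = GamMu N P Pun η E / N * groupPowerPerSinr P η E j := by
  rw [qdlStarMu, sum_xStarMu_mul_eq hη, groupPowerPerSinr]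
  generalize ∑ t, (1 + η j t * P) / η j t = L
  field_simp

theorem sum_qdlStarMu (hη : ∀ j k, 0 < η j k) (hΥ : ∀ j, UpsMu P η E j ≠ 0) (hN : N ≠ 0)
    (hD : 0 < ∑ j, groupPowerPerSinr P η E j) :
    ∑ j, qdlStarMu N P Pun η E j = P - Pun := by
  simp only [qdlStarMu_eq hη (hΥ _), ← mul_sum, GamMu_eq hη]
  field_simp [hD.ne']

theorem xiMu_star {U : ℕ} (hUG : U + G ≠ 0) (hη : ∀ j k, 0 < η j k) (j : Fin G)
    (k : Fin (K j)) :
    xiMu η (U + G) (qupStarMu U P η E) j k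
      = UpsMu P η E j * (1 + η j k * P) / (1 + ∑ t, xStarMu P η E j t * η j t) := by
  have hcancel : ∀ t, ((U + G : ℕ) : ℝ) * qupStarMu U P η E j t = xStarMu P η E j t :=
    fun t => mul_div_cancel₀ _ (Nat.cast_ne_zero.2 hUG)
  simp only [xiMu, hcancel, xStarMu, div_mul_cancel₀ _ (pow_ne_zero 2 (hη j k).ne')]

theorem sinrMu_star {U : ℕ} (hUG : U + G ≠ 0) (hN : N ≠ 0) (hη : ∀ j k, 0 < η j k)
    (hP : 0 ≤ P) (hΥ : ∀ j, 0 < UpsMu P η E j) (hD : 0 < ∑ j, groupPowerPerSinr P η E j)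
    (j : Fin G) (k : Fin (K j)) :
    sinrMu N Pun η (U + G) (qupStarMu U P η E) (qdlStarMu N P Pun η E) j k
      = GamMu N P Pun η E := by
  rw [sinrMu, sum_qdlStarMu hη (fun j => (hΥ j).ne') hN hD, xiMu_star hUG hη, qdlStarMu,
    sum_xStarMu_mul_eq hη, add_sub_cancel]
  have hL : 0 ≤ ∑ t, (1 + η j t * P) / η j t :=
    sum_nonneg fun t _ => by have := hη j t; positivity
  have := hΥ j; have := hη j k
  generalize ∑ t, (1 + η j t * P) / η j t = L at hL ⊢
  field_simp

theorem xStarMu_le (hη : ∀ j k, 0 < η j k) (hP : 0 ≤ P) (j : Fin G) (k : Fin (K j)) :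
    xStarMu P η E j k ≤ E j k := by
  have := hη j k
  rw [xStarMu, div_le_iff₀ (by positivity)]
  exact (le_div_iff₀ (by positivity)).1 (UpsMu_le j k)

theorem GamMu_nonneg (hη : ∀ j k, 0 < η j k) (hPun : Pun ≤ P)
    (hD : 0 < ∑ j, groupPowerPerSinr P η E j) : 0 ≤ GamMu N P Pun η E := by
  rw [GamMu_eq hη]
  exact div_nonneg (mul_nonneg (sub_nonneg.2 hPun) N.cast_nonneg) hD.le

theorem feasMu_star (hT : U + G ≤ T) (hUG : U + G ≠ 0) (hη : ∀ j k, 0 < η j k) (hP : 0 ≤ P)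
    (hPun : Pun ≤ P) (hΥ : ∀ j, 0 < UpsMu P η E j) (hN : N ≠ 0)
    (hD : 0 < ∑ j, groupPowerPerSinr P η E j) :
    feasMu U T P Pun E (U + G) (qupStarMu U P η E) (qdlStarMu N P Pun η E) := by
  refine ⟨le_rfl, hT, fun j k => ⟨?_, ?_⟩, fun j => ?_,
    (sum_qdlStarMu hη (fun j => (hΥ j).ne') hN hD).le⟩
  · have := hΥ j; have := hη j k
    rw [qupStarMu, xStarMu]
    positivity
  · rw [qupStarMu, mul_div_cancel₀ _ (Nat.cast_ne_zero.2 hUG)]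
    exact xStarMu_le hη hP j k
  · rw [qdlStarMu_eq hη (hΥ j).ne']
    exact mul_nonneg (div_nonneg (GamMu_nonneg hη hPun hD) N.cast_nonneg)
      (groupPowerPerSinr_pos hη hP (hΥ j)).le

theorem objMu_le_seMu (j : Fin G) (k : Fin (K j)) :
    objMu N T Pun η τ qup qdl ≤ seMu N T Pun η τ qup qdl j k :=
  (ciInf_le (Finite.bddBelow_range _) j).trans (ciInf_le (Finite.bddBelow_range _) k)

theorem objMu_eq_of_forall_seMu_eq [Nonempty (Fin G)] [∀ j, Nonempty (Fin (K j))] {v : ℝ}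
    (h : ∀ j k, seMu N T Pun η τ qup qdl j k = v) : objMu N T Pun η τ qup qdl = v := by
  simp only [objMu, h, ciInf_const]

theorem sinrMu_nonneg (hη : ∀ j k, 0 < η j k) (hPun : 0 ≤ Pun) (hqup : ∀ j k, 0 ≤ qup j k)
    (hqdl : ∀ j, 0 ≤ qdl j) (j : Fin G) (k : Fin (K j)) : 0 ≤ sinrMu N Pun η τ qup qdl j k := by
  have hQ : 0 ≤ ∑ i, qdl i := sum_nonneg fun i _ => hqdl i
  have hx : 0 ≤ ∑ t, (τ : ℝ) * qup j t * η j t :=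
    sum_nonneg fun t _ => by have := hqup j t; have := hη j t; positivity
  have := hqup j k; have := hqdl j; have := hη j k
  rw [sinrMu, xiMu]
  positivity

theorem exists_sinrMu_mul_powerPerSinr_le (hη : ∀ j k, 0 < η j k) (hPun : 0 ≤ Pun)
    (hqup : ∀ j k, 0 ≤ qup j k ∧ (τ : ℝ) * qup j k ≤ E j k) (hqdl : ∀ j, 0 ≤ qdl j)
    (j : Fin G) [Nonempty (Fin (K j))] (i : Fin (K j)) :
    ∃ k, sinrMu N Pun η τ qup qdl j k * powerPerSinr (η j) (E j) i (Pun + ∑ l, qdl l)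
      ≤ N * qdl j := by
  obtain ⟨k, hk⟩ := exists_gain_mul_powerPerSinr_le (x := fun k => (τ : ℝ) * qup j k) (hη j)
    (fun k => mul_nonneg τ.cast_nonneg (hqup j k).1) (fun k => (hqup j k).2)
    (add_nonneg hPun (sum_nonneg fun l _ => hqdl l)) i
  refine ⟨k, ?_⟩
  calc sinrMu N Pun η τ qup qdl j k * powerPerSinr (η j) (E j) i (Pun + ∑ l, qdl l)
      = N * qdl j * (τ * qup j k * η j k ^ 2 / (1 + ∑ t, τ * qup j t * η j t)
          / (1 + η j k * (Pun + ∑ l, qdl l))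
          * powerPerSinr (η j) (E j) i (Pun + ∑ l, qdl l)) := by
        rw [sinrMu, xiMu, mul_div_assoc, mul_assoc]
    _ ≤ N * qdl j * 1 := mul_le_mul_of_nonneg_left hk (mul_nonneg N.cast_nonneg (hqdl j))
    _ = N * qdl j := mul_one _

theorem exists_sinrMu_le_GamMu [Nonempty (Fin G)] [∀ j, Nonempty (Fin (K j))]
    (hη : ∀ j k, 0 < η j k) (hE : ∀ j k, 0 < E j k) (hPun : 0 ≤ Pun)
    (hfeas : feasMu U T P Pun E τ qup qdl) :
    ∃ j k, sinrMu N Pun η τ qup qdl j k ≤ GamMu N P Pun η E := by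
  obtain ⟨-, -, hqup, hqdl, hQM⟩ := hfeas
  have hQ : 0 ≤ ∑ l, qdl l := sum_nonneg fun l _ => hqdl l
  have hP : 0 ≤ P := by linarith
  choose k₁ hk₁ using fun j => exists_UpsMu_eq (P := P) (η := η) (E := E) j
  set c : Fin G → ℝ := fun j => powerPerSinr (η j) (E j) (k₁ j) (Pun + ∑ l, qdl l)
  have hc : ∀ j, 0 < c j := fun j => powerPerSinr_pos (hη j) (hE j _) (by positivity)
  have hD : ∑ j, groupPowerPerSinr P η E j
      = ∑ j, powerPerSinr (η j) (E j) (k₁ j) (Pun + (P - Pun)) := by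
    rw [add_sub_cancel]
    exact sum_congr rfl fun j _ => (powerPerSinr_eq_groupPowerPerSinr (hk₁ j)).symm
  have hDpos : 0 < ∑ j, groupPowerPerSinr P η E j :=
    sum_pos (fun j _ => groupPowerPerSinr_pos hη hP (UpsMu_pos hη hE hP j)) univ_nonempty
  have hQD : (∑ l, qdl l) * ∑ j, groupPowerPerSinr P η E j ≤ (P - Pun) * ∑ j, c j := by
    rw [hD, mul_sum, mul_sum]
    exact sum_le_sum fun j _ => mul_powerPerSinr_le (fun t => (hη j t).le) (hE j _).le hPun hQM
  have hsum : ∑ j, (N : ℝ) * qdl j ≤ ∑ j, GamMu N P Pun η E * c j := by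
    rw [← mul_sum, ← mul_sum, GamMu_eq hη, div_mul_eq_mul_div, le_div_iff₀ hDpos]
    linear_combination (N : ℝ) * hQD
  obtain ⟨j, -, hj⟩ := exists_le_of_sum_le univ_nonempty hsum
  obtain ⟨k, hk⟩ := exists_sinrMu_mul_powerPerSinr_le hη hPun hqup hqdl j (k₁ j)
  exact ⟨j, k, le_of_mul_le_mul_right (hk.trans hj) (hc j)⟩

theorem objMu_le_of_feasMu [Nonempty (Fin G)] [∀ j, Nonempty (Fin (K j))]
    (hη : ∀ j k, 0 < η j k) (hE : ∀ j k, 0 < E j k) (hPun : 0 ≤ Pun)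
    (hfeas : feasMu U T P Pun E τ qup qdl) :
    objMu N T Pun η τ qup qdl
      ≤ (1 - ((U + G : ℕ) : ℝ) / T) * Real.logb 2 (1 + GamMu N P Pun η E) := by
  obtain ⟨j, k, hjk⟩ := exists_sinrMu_le_GamMu (N := N) hη hE hPun hfeas
  obtain ⟨hUGτ, hτT, hqup, hqdl, -⟩ := hfeas
  exact (objMu_le_seMu j k).trans <| one_sub_div_mul_logb_le T.cast_nonneg
    (Nat.cast_le.2 hUGτ) (Nat.cast_le.2 hτT)
    (sinrMu_nonneg hη hPun (fun j k => (hqup j k).1) hqdl j k) hjk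

end

theorem mmf_optimal_value_general
    (U G : ℕ) (hG : 1 ≤ G) (K : Fin G → ℕ) (hK : ∀ j, 1 ≤ K j)
    (N : ℕ) (hN : 1 ≤ N) (T : ℕ) (hT : U + G ≤ T)
    (P : ℝ)
    (η E : ∀ j : Fin G, Fin (K j) → ℝ)
    (hη : ∀ j k, 0 < η j k) (hE : ∀ j k, 0 < E j k)
    (Pun : ℝ) (hPun0 : 0 ≤ Pun) (hPunP : Pun ≤ P) :
    sSup {v : ℝ | ∃ (τ : ℕ) (qup : ∀ j : Fin G, Fin (K j) → ℝ) (qdl : Fin G → ℝ),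
        feasMu U T P Pun E τ qup qdl ∧ v = objMu N T Pun η τ qup qdl}
      = (1 - ((U + G : ℕ) : ℝ) / (T : ℝ)) * Real.logb 2 (1 + GamMu N P Pun η E) := by
  have : Nonempty (Fin G) := ⟨⟨0, hG⟩⟩
  have (j : Fin G) : Nonempty (Fin (K j)) := ⟨⟨0, hK j⟩⟩
  have hP0 : 0 ≤ P := hPun0.trans hPunP
  have hUG : U + G ≠ 0 := by omega
  have hN0 : N ≠ 0 := by omega
  have hΥ (j : Fin G) : 0 < UpsMu P η E j := UpsMu_pos hη hE hP0 j
  have hD : 0 < ∑ j, groupPowerPerSinr P η E j :=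
    sum_pos (fun j _ => groupPowerPerSinr_pos hη hP0 (hΥ j)) univ_nonempty
  refine IsGreatest.csSup_eq ⟨⟨U + G, _, _, feasMu_star hT hUG hη hP0 hPunP hΥ hN0 hD, ?_⟩, ?_⟩
  · refine (objMu_eq_of_forall_seMu_eq fun j k => ?_).symm
    rw [seMu, sinrMu_star hUG hN0 hη hP0 hΥ hD]
  · rintro v ⟨τ, qup, qdl, hfeas, rfl⟩
    exact objMu_le_of_feasMu hη hE hPun0 hfeas

/-- Theorem 1 of the paper, optimal value of P1: for any fixed
unicast power `P_un ∈ [0,P]`, the supremum of `min_{j,k} SE_{jk}` over all feasible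
points of P1 equals `(1 - (U+G)/T) log₂(1 + Γ)`. -/
theorem mmf_optimal_value
    (U G : ℕ) (hG : 1 ≤ G) (K : Fin G → ℕ) (hK : ∀ j, 1 ≤ K j)
    (N : ℕ) (hN : 1 ≤ N) (T : ℕ) (hT : U + G ≤ T)
    (P : ℝ) (hP : 0 < P)
    (η E : ∀ j : Fin G, Fin (K j) → ℝ)
    (hη : ∀ j k, 0 < η j k) (hE : ∀ j k, 0 < E j k)
    (Pun : ℝ) (hPun0 : 0 ≤ Pun) (hPunP : Pun ≤ P) :
    sSup {v : ℝ | ∃ (τ : ℕ) (qup : ∀ j : Fin G, Fin (K j) → ℝ) (qdl : Fin G → ℝ),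
        feasMu U T P Pun E τ qup qdl ∧ v = objMu N T Pun η τ qup qdl}
      = (1 - ((U + G : ℕ) : ℝ) / (T : ℝ)) * Real.logb 2 (1 + GamMu N P Pun η E) :=
  mmf_optimal_value_general U G hG K hK N hN T hT P η E hη hE Pun hPun0 hPunP
end
end

section
/- Let K ≥ 1 and let c_k > 0, η_k > 0, E_k > 0 for k = 1,…,K, and set Υ = min_{1≤k≤K} c_k E_k. Then the maximum of f(x) = (min_{1≤k≤K} c_k x_k) / (1 + Σ_{t=1}^K η_t x_t) over the box {x ∈ ℝ^K : 0 ≤ x_k ≤ E_k for all k} equals Υ / (1 + Υ Σ_{t=1}^K η_t/c_t), and it is attained at the point x_k* = Υ/c_k (which satisfies 0 ≤ x_k* ≤ E_k for all k). -/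
open Finset

/-!
Put `m = min_k c_k x_k`. Since `x_k ≥ m / c_k`, the denominator is at least `1 + m Σ_t η_t / c_t`,
so `f x ≤ g m` with `g s = s / (1 + s Σ_t η_t / c_t)`. The map `g` is increasing on `[0, ∞)` and
`m ≤ Υ` on the box, hence `f x ≤ g Υ`; and `x* = Υ / c` has all `c_k x*_k = Υ`, so `f x* = g Υ`.
-/

theorem div_one_add_mul_le_div_one_add_mul {a b S : ℝ} (ha : 0 ≤ a) (hab : a ≤ b) (hS : 0 ≤ S) :
    a / (1 + a * S) ≤ b / (1 + b * S) := by
  rw [div_le_div_iff₀ (by positivity) (by nlinarith)]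
  nlinarith

theorem mul_sum_div_le_sum_mul {ι : Type*} (s : Finset ι) {c η x : ι → ℝ} {m : ℝ}
    (hc : ∀ k, 0 < c k) (hη : ∀ k, 0 ≤ η k) (hm : ∀ k, m ≤ c k * x k) :
    m * ∑ t ∈ s, η t / c t ≤ ∑ t ∈ s, η t * x t := by
  rw [mul_sum]
  refine sum_le_sum fun t _ => ?_
  calc m * (η t / c t) ≤ c t * x t * (η t / c t) :=
        mul_le_mul_of_nonneg_right (hm t) (div_nonneg (hη t) (hc t).le)
    _ = η t * x t := by field_simp [(hc t).ne']

section Box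

variable {ι : Type*} [Fintype ι] {c η E : ι → ℝ}

theorem iInf_mul_div_le (hc : ∀ k, 0 < c k) (k : ι) : (⨅ j, c j * E j) / c k ≤ E k := by
  rw [div_le_iff₀ (hc k), mul_comm]
  exact ciInf_le (Finite.bddBelow_range _) k

variable [Nonempty ι]

theorem iInf_mul_div_one_add_sum_le (hc : ∀ k, 0 < c k) (hη : ∀ k, 0 ≤ η k)
    {x : ι → ℝ} (hx : ∀ k, 0 ≤ x k ∧ x k ≤ E k) :
    (⨅ k, c k * x k) / (1 + ∑ t, η t * x t)
      ≤ (⨅ k, c k * E k) / (1 + (⨅ k, c k * E k) * ∑ t, η t / c t) := by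
  set m := ⨅ k, c k * x k
  have hm_nonneg : 0 ≤ m := le_ciInf fun k => mul_nonneg (hc k).le (hx k).1
  have hm_le : ∀ k, m ≤ c k * x k := ciInf_le (Finite.bddBelow_range _)
  have hmE : m ≤ ⨅ k, c k * E k := ciInf_mono (Finite.bddBelow_range _) fun k =>
    mul_le_mul_of_nonneg_left (hx k).2 (hc k).le
  have hS : 0 ≤ ∑ t, η t / c t := sum_nonneg fun t _ => div_nonneg (hη t) (hc t).le
  calc m / (1 + ∑ t, η t * x t) ≤ m / (1 + m * ∑ t, η t / c t) :=
        div_le_div_of_nonneg_left hm_nonneg (by positivity)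
          (by linarith [mul_sum_div_le_sum_mul univ hc hη hm_le])
    _ ≤ _ := div_one_add_mul_le_div_one_add_mul hm_nonneg hmE hS

theorem iInf_mul_pos (hc : ∀ k, 0 < c k) (hE : ∀ k, 0 < E k) : 0 < ⨅ k, c k * E k := by
  obtain ⟨i, hi⟩ := exists_eq_ciInf_of_finite (f := fun k => c k * E k)
  rw [← hi]
  exact mul_pos (hc i) (hE i)

end Box

/-- the maximum of `f(x) = (min_k c_k x_k)/(1 + Σ_t η_t x_t)` over the
box `0 ≤ x_k ≤ E_k` equals `Υ / (1 + Υ Σ_t η_t/c_t)` with `Υ = min_k c_k E_k`, and is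
attained at `x_k* = Υ/c_k`, which lies in the box. -/
theorem minOverLinear_max_on_box
    (K : ℕ) (hK : 1 ≤ K) (c η E : Fin K → ℝ)
    (hc : ∀ k, 0 < c k) (hη : ∀ k, 0 < η k) (hE : ∀ k, 0 < E k) :
    (∀ x : Fin K → ℝ, (∀ k, 0 ≤ x k ∧ x k ≤ E k) →
        (⨅ k, c k * x k) / (1 + ∑ t, η t * x t)
          ≤ (⨅ k, c k * E k) / (1 + (⨅ k, c k * E k) * ∑ t, η t / c t)) ∧
    (∀ k, 0 ≤ (⨅ j, c j * E j) / c k ∧ (⨅ j, c j * E j) / c k ≤ E k) ∧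
    (⨅ k, c k * ((⨅ j, c j * E j) / c k)) / (1 + ∑ t, η t * ((⨅ j, c j * E j) / c t))
      = (⨅ k, c k * E k) / (1 + (⨅ k, c k * E k) * ∑ t, η t / c t) := by
  have : Nonempty (Fin K) := ⟨⟨0, hK⟩⟩
  set Υ := ⨅ j, c j * E j
  have hΥ : 0 < Υ := iInf_mul_pos hc hE
  have hsum : ∑ t, η t * (Υ / c t) = Υ * ∑ t, η t / c t := by
    rw [mul_sum]
    exact sum_congr rfl fun t _ => by ring
  refine ⟨fun x hx => iInf_mul_div_one_add_sum_le hc (fun k => (hη k).le) hx,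
    fun k => ⟨(div_pos hΥ (hc k)).le, iInf_mul_div_le hc k⟩, ?_⟩
  simp only [fun k => mul_div_cancel₀ Υ (hc k).ne', ciInf_const, hsum]
end
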